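/- Consider the Gerber–Dickson risk process whose claims follow the geometric distribution f(y) = p(1 − p)^y for y = 0,1,2,…, with 1/2 < p ≤ 1 (so the net profit condition E[Y] = (1−p)/p < 1 holds). Then the ultimate ruin probability is ψ(u) = ((1 − p)/p)^{u+1} for every integer u ≥ 0. -/

import Mathlib

/-!
Conditioning on the first claim, the survival probability `φ = 1 - ψ` satisfies the renewal
equation `φ u = ∑_{y ≤ u} f y * φ (u + 1 - y)`: the first claim is independent of the shifted
claim sequence, which has the same law as the original one. For geometric claims this collapses
to `φ (u + 1) = (1 - p) φ u + p φ (u + 2)`, so `p φ (u + 1) - (1 - p) φ u` is constant. By the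
strong law of large numbers (`E Y = (1 - p) / p < 1`) the claims eventually stay below the
premiums, so `φ u → 1`; this fixes the constant and gives `1 - φ u = ((1 - p) / p) ^ (u + 1)`.
-/

open MeasureTheory ProbabilityTheory Filter Topology Finset

namespace ProbabilityTheory

section Sequence

variable {Ω β : Type*} [MeasurableSpace Ω] [MeasurableSpace β] {P : Measure Ω} {X : ℕ → Ω → β}

lemma iIndepFun.indepFun_zero_tail (hX : ∀ j, Measurable (X j)) (hindep : iIndepFun X P) :
    IndepFun (X 0) (fun ω j => X (j + 1) ω) P := by
  rw [IndepFun_iff_Indep]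
  refine indep_of_indep_of_le (indep_iSup_of_disjoint (fun j => (hX j).comap_le)
    hindep.iIndep (S := {0}) (T := Set.Ici 1) (by simp)) (le_iSup₂_of_le 0 rfl le_rfl) ?_
  exact (@measurable_pi_lambda _ _ _ (⨆ i ∈ Set.Ici 1, MeasurableSpace.comap (X i) inferInstance)
    _ _ fun j => (comap_measurable (X (j + 1))).mono
      (le_iSup₂_of_le (j + 1) (by simp) le_rfl) le_rfl).comap_le

lemma iIndepFun.map_tail_eq [IsProbabilityMeasure P] (hX : ∀ j, Measurable (X j))
    (hindep : iIndepFun X P) (hident : ∀ j, IdentDistrib (X j) (X 0) P P) :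
    P.map (fun ω j => X (j + 1) ω) = P.map (fun ω j => X j ω) := by
  have := Measure.isProbabilityMeasure_map (μ := P) (hX 0).aemeasurable
  rw [(hindep.precomp (add_left_injective 1)).map_fun_eq_infinitePi_map fun j => hX _,
    hindep.map_fun_eq_infinitePi_map hX]
  congr with j : 1
  exact (hident _).map_eq.trans (hident _).map_eq.symm

end Sequence

section Geometric

variable {p : unitInterval}

lemma _root_.unitInterval.norm_one_sub_lt_one (hp : p ≠ 0) : ‖(1 - p : ℝ)‖ < 1 := by
  have h0 : (0 : ℝ) < p := unitInterval.pos_iff_ne_zero.2 hp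
  rw [Real.norm_of_nonneg (by linarith [p.2.2])]
  linarith

lemma integrable_natCast_geometricMeasure (hp : p ≠ 0) :
    Integrable (fun n : ℕ => (n : ℝ)) (geometricMeasure p) := by
  rw [integrable_geometricMeasure_iff hp]
  refine ((summable_pow_mul_geometric_of_norm_lt_one 1
    (unitInterval.norm_one_sub_lt_one hp)).mul_left (p : ℝ)).congr fun n => ?_
  rw [Real.norm_natCast]
  ring

lemma integral_natCast_geometricMeasure (hp : p ≠ 0) :
    ∫ n, (n : ℝ) ∂geometricMeasure p = (1 - p) / p := by
  have hp0 : (p : ℝ) ≠ 0 := fun h => hp (Subtype.ext h)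
  rw [integral_geometricMeasure hp]
  calc ∑' n : ℕ, ((1 - p : ℝ) ^ n * p) • (n : ℝ) = p * ∑' n : ℕ, (n : ℝ) * (1 - p) ^ n := by
        rw [← tsum_mul_left]
        exact tsum_congr fun n => by rw [smul_eq_mul]; ring
    _ = (1 - p) / p := by
        rw [tsum_coe_mul_geometric_of_norm_lt_one (unitInterval.norm_one_sub_lt_one hp),
          sub_sub_cancel]
        field_simp

lemma hasLaw_geometricMeasure {Ω : Type*} [MeasurableSpace Ω] {P : Measure Ω} [IsFiniteMeasure P]
    {X : Ω → ℕ} (hX : Measurable X) (hp : p ≠ 0)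
    (hf : ∀ y : ℕ, P.real {ω | X ω = y} = p * (1 - p) ^ y) :
    HasLaw X (geometricMeasure p) P where
  map_eq := Measure.ext_of_singleton fun y => by
    rw [Measure.map_apply hX (measurableSet_singleton y), geometricMeasure_singleton hp,
      ← ofReal_measureReal (measure_ne_top P _)]
    exact congrArg ENNReal.ofReal ((hf y).trans (mul_comm _ _))

end Geometric

end ProbabilityTheory

theorem eq_one_sub_pow_of_geometric_renewal {p : ℝ} (hp : p ≠ 0) {φ : ℕ → ℝ}
    (hφ : ∀ u, φ u = ∑ y ∈ range (u + 1), p * (1 - p) ^ y * φ (u + 1 - y))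
    (hlim : Tendsto φ atTop (𝓝 1)) (u : ℕ) : φ u = 1 - ((1 - p) / p) ^ (u + 1) := by
  have hstep (u : ℕ) : φ (u + 1) = (1 - p) * φ u + p * φ (u + 2) := by
    rw [hφ (u + 1), sum_range_succ', hφ u, mul_sum]
    congr 1
    · exact sum_congr rfl fun y _ => by rw [Nat.add_sub_add_right, pow_succ]; ring
    · simp
  have hinv (u : ℕ) : p * φ (u + 1) - (1 - p) * φ u = p * φ 0 := by
    induction u with
    | zero =>
      have h := hφ 0
      simp only [zero_add, sum_range_one, pow_zero, mul_one, Nat.sub_zero] at h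
      linarith
    | succ u ih => linarith [hstep u]
  have h0 : p * φ 0 = p - (1 - p) := by
    refine tendsto_nhds_unique (l := atTop) (f := fun _ : ℕ => p * φ 0) tendsto_const_nhds ?_
    rw [← funext hinv]
    simpa using ((hlim.comp (tendsto_add_atTop_nat 1)).const_mul p).sub (hlim.const_mul (1 - p))
  induction u with
  | zero =>
    rw [zero_add, pow_one]
    field_simp
    linarith
  | succ u ih =>
    have hpr : p * ((1 - p) / p) = 1 - p := mul_div_cancel₀ _ hp
    have h := hinv u
    rw [h0, ih] at h
    apply mul_left_cancel₀ hp
    rw [pow_succ _ (u + 1)]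
    linear_combination h + ((1 - p) / p) ^ (u + 1) * hpr

namespace GerberDickson

/-- The paper's `U(t)`, for initial capital `u` and the claim path `y`. -/
def surplus (u : ℤ) (y : ℕ → ℕ) (t : ℕ) : ℤ := u + t - ∑ j ∈ range t, (y j : ℤ)

def ruinSet (u : ℕ) : Set (ℕ → ℕ) := {y | ∃ t, 1 ≤ t ∧ surplus u y t ≤ 0}

@[simp] lemma surplus_zero (u : ℤ) (y : ℕ → ℕ) : surplus u y 0 = u := by simp [surplus]

lemma surplus_succ (u : ℤ) (y : ℕ → ℕ) (t : ℕ) :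
    surplus u y (t + 1) = surplus (u + 1 - y 0) (fun j => y (j + 1)) t := by
  simp only [surplus, sum_range_succ', Nat.cast_add, Nat.cast_one]
  ring

lemma notMem_ruinSet_iff {u : ℕ} {y : ℕ → ℕ} :
    y ∉ ruinSet u ↔ y 0 ≤ u ∧ (fun j => y (j + 1)) ∉ ruinSet (u + 1 - y 0) := by
  simp only [ruinSet, Set.mem_ofPred_eq, not_exists, not_and, not_le]
  constructor
  · intro h
    have h0 : y 0 ≤ u := by
      have := h 1 le_rfl
      rw [surplus_succ, surplus_zero] at this
      omega
    refine ⟨h0, fun t ht => ?_⟩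
    have := h (t + 1) (by omega)
    rwa [surplus_succ, show ((u : ℤ) + 1 - y 0) = ((u + 1 - y 0 : ℕ) : ℤ) by omega] at this
  · rintro ⟨h0, h⟩ t ht
    obtain ⟨s, rfl⟩ : ∃ s, t = s + 1 := ⟨t - 1, by omega⟩
    rw [surplus_succ, show ((u : ℤ) + 1 - y 0) = ((u + 1 - y 0 : ℕ) : ℤ) by omega]
    rcases Nat.eq_zero_or_pos s with rfl | hs
    · rw [surplus_zero]
      omega
    · exact h s hs

lemma antitone_ruinSet : Antitone ruinSet := by
  rintro u v huv y ⟨t, ht, hy⟩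
  refine ⟨t, ht, le_trans ?_ hy⟩
  simp only [surplus]
  omega

lemma measurableSet_ruinSet (u : ℕ) : MeasurableSet (ruinSet u) := by
  have : ruinSet u = ⋃ t, ⋃ (_ : 1 ≤ t), {y | surplus u y t ≤ 0} := by ext; simp [ruinSet]
  rw [this]
  refine .iUnion fun t => .iUnion fun _ => measurableSet_le ?_ measurable_const
  unfold surplus
  fun_prop

lemma exists_notMem_ruinSet {y : ℕ → ℕ} {N : ℕ} (h : ∀ t ≥ N, ∑ j ∈ range t, y j < t) :
    ∃ u, y ∉ ruinSet u := by
  refine ⟨∑ j ∈ range N, y j, ?_⟩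
  rintro ⟨t, ht, hy⟩
  simp only [surplus, ← Nat.cast_sum] at hy
  rcases le_or_gt N t with hNt | htN
  · have := h t hNt
    omega
  · have : ∑ j ∈ range t, y j ≤ ∑ j ∈ range N, y j :=
      sum_le_sum_of_subset (range_subset_range.2 htN.le)
    omega

variable {Ω : Type*} [MeasurableSpace Ω] {P : Measure Ω} [IsProbabilityMeasure P]
  {Y : ℕ → Ω → ℕ}

theorem measureReal_preimage_compl_ruinSet_eq_sum (hYmeas : ∀ j, Measurable (Y j))
    (hindep : iIndepFun Y P) (hident : ∀ j, IdentDistrib (Y j) (Y 0) P P) (u : ℕ) :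
    P.real ((fun ω j => Y j ω) ⁻¹' (ruinSet u)ᶜ) = ∑ y ∈ range (u + 1),
      P.real {ω | Y 0 ω = y} * P.real ((fun ω j => Y j ω) ⁻¹' (ruinSet (u + 1 - y))ᶜ) := by
  have hpath : Measurable fun ω j => Y j ω := measurable_pi_iff.2 hYmeas
  have htail : Measurable fun ω j => Y (j + 1) ω := measurable_pi_iff.2 fun j => hYmeas _
  have hsplit : (fun ω j => Y j ω) ⁻¹' (ruinSet u)ᶜ = ⋃ y ∈ range (u + 1),
      Y 0 ⁻¹' {y} ∩ (fun ω j => Y (j + 1) ω) ⁻¹' (ruinSet (u + 1 - y))ᶜ := by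
    ext ω
    simp only [Set.mem_preimage, Set.mem_compl_iff, Set.mem_iUnion, Set.mem_inter_iff,
      Set.mem_singleton_iff, mem_range, exists_prop]
    rw [notMem_ruinSet_iff]
    constructor
    · rintro ⟨h0, h⟩
      exact ⟨Y 0 ω, by omega, rfl, h⟩
    · rintro ⟨y, hy, rfl, h⟩
      exact ⟨by omega, h⟩
  rw [hsplit, measureReal_biUnion_finset]
  · refine sum_congr rfl fun y _ => ?_
    simp only [measureReal_def]
    rw [(hindep.indepFun_zero_tail hYmeas).measure_inter_preimage_eq_mul _ _
      (measurableSet_singleton y) (measurableSet_ruinSet _).compl, ENNReal.toReal_mul,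
      ← Measure.map_apply htail (measurableSet_ruinSet _).compl,
      hindep.map_tail_eq hYmeas hident, Measure.map_apply hpath (measurableSet_ruinSet _).compl]
    rfl
  · intro y _ z _ hyz
    exact Disjoint.mono Set.inter_subset_left Set.inter_subset_left
      ((Set.disjoint_singleton.2 hyz).preimage (Y 0))
  · exact fun y _ => (hYmeas 0 (measurableSet_singleton y)).inter
      (htail (measurableSet_ruinSet _).compl)

theorem tendsto_measureReal_preimage_ruinSet (hYmeas : ∀ j, Measurable (Y j))
    (hindep : iIndepFun Y P) (hident : ∀ j, IdentDistrib (Y j) (Y 0) P P)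
    (hint : Integrable (fun ω => (Y 0 ω : ℝ)) P) (hmean : ∫ ω, (Y 0 ω : ℝ) ∂P < 1) :
    Tendsto (fun u => P.real ((fun ω j => Y j ω) ⁻¹' ruinSet u)) atTop (𝓝 0) := by
  have hcast : Measurable fun n : ℕ => (n : ℝ) := measurable_of_countable _
  have hslln := strong_law_ae_real (fun j ω => (Y j ω : ℝ)) hint
    (fun i j hij => (hindep.indepFun hij).comp hcast hcast) fun j => (hident j).comp hcast
  have hnull : P (⋂ u, (fun ω j => Y j ω) ⁻¹' ruinSet u) = 0 := by
    rw [measure_eq_zero_iff_ae_notMem]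
    filter_upwards [hslln] with ω hω
    obtain ⟨N, hN⟩ :=
      eventually_atTop.1 ((hω.eventually_lt_const hmean).and (eventually_ge_atTop 1))
    obtain ⟨u, hu⟩ := exists_notMem_ruinSet (y := fun j => Y j ω) (N := N) fun t ht => by
      obtain ⟨hlt, ht1⟩ := hN t ht
      rw [div_lt_one (by exact_mod_cast ht1)] at hlt
      exact_mod_cast hlt
    exact fun h => hu (Set.mem_iInter.1 h u)
  have hpath : Measurable fun ω j => Y j ω := measurable_pi_iff.2 hYmeas
  have := tendsto_measure_iInter_atTop
    (fun u => (hpath (measurableSet_ruinSet u)).nullMeasurableSet)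
    (fun u v huv => Set.preimage_mono (antitone_ruinSet huv)) ⟨0, measure_ne_top P _⟩
  rw [hnull] at this
  exact (ENNReal.tendsto_toReal ENNReal.zero_ne_top).comp this

end GerberDickson

open GerberDickson in
/-- For the Gerber–Dickson risk process with geometric claims `f(y) = p(1−p)^y`,
`1/2 < p ≤ 1`, the ruin probability is `ψ(u) = ((1 − p)/p)^{u+1}` for all `u ≥ 0`. -/
theorem stmt_17
    {Ω : Type*} [MeasurableSpace Ω] (P : Measure Ω) [IsProbabilityMeasure P]
    (Y : ℕ → Ω → ℕ) (hYmeas : ∀ j, Measurable (Y j))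
    (hindep : iIndepFun Y P)
    (hident : ∀ j, IdentDistrib (Y j) (Y 0) P P)
    (p : ℝ) (hp : 1 / 2 < p) (hp1 : p ≤ 1)
    (hf : ∀ y : ℕ, (P {ω | Y 0 ω = y}).toReal = p * (1 - p) ^ y)
    (ψ : ℕ → ℝ)
    (hψ : ∀ u : ℕ, ψ u = (P {ω | ∃ t : ℕ, 1 ≤ t ∧
        (u : ℤ) + t - ∑ j ∈ Finset.range t, (Y j ω : ℤ) ≤ 0}).toReal) :
    ∀ u : ℕ, ψ u = ((1 - p) / p) ^ (u + 1) := by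
  have hp0 : 0 < p := by linarith
  set q : unitInterval := ⟨p, Set.mem_Icc.2 ⟨hp0.le, hp1⟩⟩
  have hq : q ≠ 0 := fun h => hp0.ne' (congrArg Subtype.val h)
  have hf' : ∀ y : ℕ, P.real {ω | Y 0 ω = y} = p * (1 - p) ^ y := hf
  have hlaw := hasLaw_geometricMeasure (hYmeas 0) hq hf'
  have hcast : Measurable fun n : ℕ => (n : ℝ) := measurable_of_countable _
  have hint : Integrable (fun ω => (Y 0 ω : ℝ)) P :=
    (integrable_map_measure hcast.aestronglyMeasurable hlaw.aemeasurable).1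
      (hlaw.map_eq ▸ integrable_natCast_geometricMeasure hq)
  have hmean : ∫ ω, (Y 0 ω : ℝ) ∂P < 1 := by
    rw [← Function.comp_def, hlaw.integral_comp hcast.aestronglyMeasurable,
      integral_natCast_geometricMeasure hq]
    exact (div_lt_one hp0).2 (by linarith)
  have hruin : ∀ u, ψ u = P.real ((fun ω j => Y j ω) ⁻¹' ruinSet u) := hψ
  have hsurv : ∀ u, 1 - ψ u = P.real ((fun ω j => Y j ω) ⁻¹' (ruinSet u)ᶜ) := fun u => by
    rw [hruin, Set.preimage_compl,
      probReal_compl_eq_one_sub (measurable_pi_iff.2 hYmeas (measurableSet_ruinSet u))]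
  have hrenewal (u : ℕ) :
      1 - ψ u = ∑ y ∈ range (u + 1), p * (1 - p) ^ y * (1 - ψ (u + 1 - y)) := by
    rw [hsurv, measureReal_preimage_compl_ruinSet_eq_sum hYmeas hindep hident]
    exact sum_congr rfl fun y _ => by rw [hf', hsurv]
  have hlim : Tendsto (fun u => 1 - ψ u) atTop (𝓝 1) := by
    simpa only [hruin, sub_zero] using
      (tendsto_measureReal_preimage_ruinSet hYmeas hindep hident hint hmean).const_sub 1
  intro u
  linarith [eq_one_sub_pow_of_geometric_renewal hp0.ne' hrenewal hlim u]
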